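/- Discrete total energy conservation for the fully discrete Fourier–Hermite scheme: Assume N_v ≥ 2. Suppose that for every species s ∈ S the fully discrete Fourier–Hermite Vlasov equations hold for all 0 ≤ n ≤ N_v and −N_x ≤ k ≤ N_x, and that the midpoint-discretized Ampère equations hold. Then the discrete total energy is conserved: Σ_{s∈S} 𝓔_k^{s,j+1} + 𝓔_p^{j+1} = Σ_{s∈S} 𝓔_k^{s,j} + 𝓔_p^{j}. -/

import Mathlib

open Finset

/-- Implicit midpoint value `X^{j+1/2} = (X^j + X^{j+1})/2`. -/
noncomputable def midpt (a b : ℂ) : ℂ := (a + b) / 2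

/-- The fully discrete Fourier–Hermite Vlasov equation with implicit midpoint
time stepping at index `(n,k)` for one species with mass `ms`, charge `qs`, and
Hermite parameters `αs`, `us`.  `Cj Cj1 : ℤ → ℤ → ℂ` are the Hermite–Fourier
coefficients of the distribution function at time levels `j` and `j+1`, and
`Ej Ej1 : ℤ → ℂ` those of the electric field. -/
noncomputable def vlasovEq (Nx : ℕ) (L Δt ms qs αs us : ℝ)
    (Cj Cj1 : ℤ → ℤ → ℂ) (Ej Ej1 : ℤ → ℂ) (n k : ℤ) : Prop :=
  (Cj1 n k - Cj n k) / (Δt : ℂ)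
    + (Real.sqrt ((n : ℝ) / 2) : ℂ) * (2 * (Real.pi : ℂ) * Complex.I * (k : ℂ) / (L : ℂ)) *
        (αs : ℂ) * midpt (Cj (n - 1) k) (Cj1 (n - 1) k)
    + (2 * (Real.pi : ℂ) * Complex.I * (k : ℂ) / (L : ℂ)) * (us : ℂ) *
        midpt (Cj n k) (Cj1 n k)
    + (Real.sqrt (((n : ℝ) + 1) / 2) : ℂ) * (2 * (Real.pi : ℂ) * Complex.I * (k : ℂ) / (L : ℂ)) *
        (αs : ℂ) * midpt (Cj (n + 1) k) (Cj1 (n + 1) k)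
    - (Real.sqrt (2 * (n : ℝ)) : ℂ) * ((qs : ℂ) / ((ms : ℂ) * (αs : ℂ))) *
        ∑ ℓ ∈ Finset.Icc (-(Nx : ℤ)) (Nx : ℤ),
          midpt (Cj (n - 1) ℓ) (Cj1 (n - 1) ℓ) * midpt (Ej (k - ℓ)) (Ej1 (k - ℓ))
    = 0

/-- Discrete kinetic energy of a species at a time level with coefficients `C`. -/
noncomputable def kineticEnergy (L ms αs us : ℝ) (C : ℤ → ℤ → ℂ) : ℂ :=
  ((ms : ℂ) * (αs : ℂ) * (L : ℂ) / 2) *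
    (((us : ℂ) ^ 2 + (αs : ℂ) ^ 2 / 2) * C 0 0
      + (Real.sqrt 2 : ℂ) * (us : ℂ) * (αs : ℂ) * C 1 0
      + ((αs : ℂ) ^ 2 / (Real.sqrt 2 : ℂ)) * C 2 0)

/-- Discrete potential energy at a time level with electric-field coefficients `E`. -/
noncomputable def potentialEnergy (Nx : ℕ) (ε₀ L : ℝ) (E : ℤ → ℂ) : ℂ :=
  ((ε₀ : ℂ) * (L : ℂ) / 2) * ∑ k ∈ Finset.Icc (-(Nx : ℤ)) (Nx : ℤ), E k * E (-k)

/-! At `k = 0` the transport terms of the Vlasov equation vanish, so the modes `Ĉ_{0,0}`, `Ĉ_{1,0}`,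
`Ĉ_{2,0}` entering the kinetic energy change only through the field term, which pairs the
midpoint moments `Ĉ_{0,·}`, `Ĉ_{1,·}` with `Ê_{-·}`: the kinetic energy gains `L Δt Σ_ℓ J_ℓ Ê_{-ℓ}`,
where `J` is the midpoint current. The midpoint rule makes the change of `Σ_k Ê_k Ê_{-k}` exactly
`2 Σ_k (Ê^{j+1}_k - Ê^j_k) Ê^{j+1/2}_{-k}`, and Ampère's law turns this into the same work term
with the opposite sign. -/

/-- The Fourier coefficient of the midpoint current density of one species; with it the Ampère
equation reads `ε₀ (Ê^{j+1}_k - Ê^j_k) / Δt + Σ_s J^s_k = 0`. -/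
noncomputable def midCurrent (qs αs us : ℝ) (Cj Cj1 : ℤ → ℤ → ℂ) (k : ℤ) : ℂ :=
  (qs : ℂ) * (αs : ℂ) *
    ((us : ℂ) * midpt (Cj 0 k) (Cj1 0 k)
      + ((αs : ℂ) / (Real.sqrt 2 : ℂ)) * midpt (Cj 1 k) (Cj1 1 k))

/-- `Σ_ℓ Ĉ^{j+1/2}_{n,ℓ} Ê^{j+1/2}_{-ℓ}`, the midpoint field term at `k = 0`. -/
noncomputable def fieldPairing (Nx : ℕ) (Cj Cj1 : ℤ → ℤ → ℂ) (Ej Ej1 : ℤ → ℂ) (n : ℤ) : ℂ :=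
  ∑ ℓ ∈ Icc (-(Nx : ℤ)) Nx, midpt (Cj n ℓ) (Cj1 n ℓ) * midpt (Ej (-ℓ)) (Ej1 (-ℓ))

section Kinetic

variable {Nx : ℕ} {L Δt ms qs αs us : ℝ} {Cj Cj1 : ℤ → ℤ → ℂ} {Ej Ej1 : ℤ → ℂ}

theorem vlasovEq_zero_mode (hΔt : Δt ≠ 0) {n : ℤ}
    (h : vlasovEq Nx L Δt ms qs αs us Cj Cj1 Ej Ej1 n 0) :
    Cj1 n 0 - Cj n 0 = Δt * Real.sqrt (2 * n) * (qs / (ms * αs))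
      * fieldPairing Nx Cj Cj1 Ej Ej1 (n - 1) := by
  have hΔt' : (Δt : ℂ) ≠ 0 := by exact_mod_cast hΔt
  simp only [vlasovEq, Int.cast_zero, mul_zero, zero_div, zero_mul, add_zero, zero_sub] at h
  rw [fieldPairing]
  field_simp at h
  linear_combination h

theorem kineticEnergy_sub (hms : ms ≠ 0) (hαs : αs ≠ 0) (hΔt : Δt ≠ 0)
    (h₀ : vlasovEq Nx L Δt ms qs αs us Cj Cj1 Ej Ej1 0 0)
    (h₁ : vlasovEq Nx L Δt ms qs αs us Cj Cj1 Ej Ej1 1 0)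
    (h₂ : vlasovEq Nx L Δt ms qs αs us Cj Cj1 Ej Ej1 2 0) :
    kineticEnergy L ms αs us Cj1 - kineticEnergy L ms αs us Cj
      = L * Δt * ∑ ℓ ∈ Icc (-(Nx : ℤ)) Nx,
          midCurrent qs αs us Cj Cj1 ℓ * midpt (Ej (-ℓ)) (Ej1 (-ℓ)) := by
  have d₀ := vlasovEq_zero_mode hΔt h₀
  have d₁ := vlasovEq_zero_mode hΔt h₁
  have d₂ := vlasovEq_zero_mode hΔt h₂
  have hsqrt4 : Real.sqrt 4 = 2 := by
    rw [show (4 : ℝ) = 2 ^ 2 by norm_num, Real.sqrt_sq zero_le_two]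
  have hsqrt2 : (Real.sqrt 2 : ℂ) ^ 2 = 2 := by
    norm_cast
    exact Real.sq_sqrt zero_le_two
  have hsqrt2_ne : (Real.sqrt 2 : ℂ) ≠ 0 := by exact_mod_cast (Real.sqrt_pos.2 two_pos).ne'
  have hms' : (ms : ℂ) ≠ 0 := by exact_mod_cast hms
  have hαs' : (αs : ℂ) ≠ 0 := by exact_mod_cast hαs
  norm_num [hsqrt4] at d₀ d₁ d₂
  field_simp at d₁ d₂
  have hcurrent : ∑ ℓ ∈ Icc (-(Nx : ℤ)) Nx, midCurrent qs αs us Cj Cj1 ℓ * midpt (Ej (-ℓ)) (Ej1 (-ℓ))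
      = qs * αs * (us * fieldPairing Nx Cj Cj1 Ej Ej1 0
          + αs / Real.sqrt 2 * fieldPairing Nx Cj Cj1 Ej Ej1 1) := by
    simp only [midCurrent, fieldPairing, mul_sum, ← sum_add_distrib]
    exact sum_congr rfl fun ℓ _ ↦ by ring
  rw [hcurrent, kineticEnergy, kineticEnergy]
  field_simp
  linear_combination (ms * L * Real.sqrt 2 * (2 * us ^ 2 + αs ^ 2) : ℂ) * d₀
    + (2 * L * Real.sqrt 2 ^ 2 * us : ℂ) * d₁ + (2 * L * αs : ℂ) * d₂
    + (2 * L * Real.sqrt 2 * us * Δt * qs * fieldPairing Nx Cj Cj1 Ej Ej1 0 : ℂ) * hsqrt2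

end Kinetic

theorem sum_Icc_neg_comp {M : Type*} [AddCommMonoid M] (N : ℤ) (f : ℤ → M) :
    ∑ k ∈ Icc (-N) N, f (-k) = ∑ k ∈ Icc (-N) N, f k :=
  sum_nbij' Neg.neg Neg.neg (fun k hk ↦ by simp only [mem_Icc] at hk ⊢; omega)
    (fun k hk ↦ by simp only [mem_Icc] at hk ⊢; omega) (fun k _ ↦ neg_neg k)
    (fun k _ ↦ neg_neg k) (fun _ _ ↦ rfl)

theorem potentialEnergy_sub (Nx : ℕ) (ε₀ L : ℝ) (Ej Ej1 : ℤ → ℂ) :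
    potentialEnergy Nx ε₀ L Ej1 - potentialEnergy Nx ε₀ L Ej
      = L * ∑ k ∈ Icc (-(Nx : ℤ)) Nx, ε₀ * (Ej1 k - Ej k) * midpt (Ej (-k)) (Ej1 (-k)) := by
  have hsplit : ∀ k, Ej1 k * Ej1 (-k) - Ej k * Ej (-k)
      = (Ej1 k - Ej k) * midpt (Ej (-k)) (Ej1 (-k))
        + (Ej1 (-k) - Ej (-k)) * midpt (Ej (-(-k))) (Ej1 (-(-k))) := fun k ↦ by
    simp only [midpt, neg_neg]; ring
  have hsym := sum_Icc_neg_comp (Nx : ℤ) fun k ↦ (Ej1 k - Ej k) * midpt (Ej (-k)) (Ej1 (-k))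
  rw [potentialEnergy, potentialEnergy, ← mul_sub, ← sum_sub_distrib,
    sum_congr rfl fun k _ ↦ hsplit k, sum_add_distrib, hsym, ← two_mul]
  simp only [mul_sum]
  exact sum_congr rfl fun k _ ↦ by ring

theorem discrete_energy_conservation_general {σ : Type*} (S : Finset σ)
    (Nv Nx : ℕ) (hNv : 2 ≤ Nv) (L Δt ε₀ : ℝ) (hΔt : 0 < Δt)
    (ms qs αs us : σ → ℝ) (hms : ∀ s ∈ S, 0 < ms s) (hαs : ∀ s ∈ S, 0 < αs s)
    (Cj Cj1 : σ → ℤ → ℤ → ℂ) (Ej Ej1 : ℤ → ℂ)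
    (hVlasov : ∀ s ∈ S, ∀ n k : ℤ, 0 ≤ n → n ≤ (Nv : ℤ) → -(Nx : ℤ) ≤ k → k ≤ (Nx : ℤ) →
      vlasovEq Nx L Δt (ms s) (qs s) (αs s) (us s) (Cj s) (Cj1 s) Ej Ej1 n k)
    (hAmpere : ∀ k : ℤ, -(Nx : ℤ) ≤ k → k ≤ (Nx : ℤ) →
      (ε₀ : ℂ) * (Ej1 k - Ej k) / (Δt : ℂ)
        + ∑ s ∈ S, (qs s : ℂ) * (αs s : ℂ) *
            ((us s : ℂ) * midpt (Cj s 0 k) (Cj1 s 0 k)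
              + ((αs s : ℂ) / (Real.sqrt 2 : ℂ)) * midpt (Cj s 1 k) (Cj1 s 1 k)) = 0) :
    (∑ s ∈ S, kineticEnergy L (ms s) (αs s) (us s) (Cj1 s)) + potentialEnergy Nx ε₀ L Ej1
      = (∑ s ∈ S, kineticEnergy L (ms s) (αs s) (us s) (Cj s))
          + potentialEnergy Nx ε₀ L Ej := by
  have hΔt' : (Δt : ℂ) ≠ 0 := by exact_mod_cast hΔt.ne'
  have hk₀ : -(Nx : ℤ) ≤ 0 ∧ (0 : ℤ) ≤ Nx := by omega
  have hkin : ∀ s ∈ S, kineticEnergy L (ms s) (αs s) (us s) (Cj1 s)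
        - kineticEnergy L (ms s) (αs s) (us s) (Cj s)
      = L * Δt * ∑ ℓ ∈ Icc (-(Nx : ℤ)) Nx,
          midCurrent (qs s) (αs s) (us s) (Cj s) (Cj1 s) ℓ * midpt (Ej (-ℓ)) (Ej1 (-ℓ)) :=
    fun s hs ↦ kineticEnergy_sub (hms s hs).ne' (hαs s hs).ne' hΔt.ne'
      (hVlasov s hs 0 0 le_rfl (by omega) hk₀.1 hk₀.2)
      (hVlasov s hs 1 0 zero_le_one (by omega) hk₀.1 hk₀.2)
      (hVlasov s hs 2 0 zero_le_two (by omega) hk₀.1 hk₀.2)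
  have hfield : ∀ k ∈ Icc (-(Nx : ℤ)) Nx, ε₀ * (Ej1 k - Ej k)
      = -(Δt * ∑ s ∈ S, midCurrent (qs s) (αs s) (us s) (Cj s) (Cj1 s) k) := fun k hk ↦ by
    rw [mem_Icc] at hk
    have h : (ε₀ : ℂ) * (Ej1 k - Ej k) / Δt
        + ∑ s ∈ S, midCurrent (qs s) (αs s) (us s) (Cj s) (Cj1 s) k = 0 := hAmpere k hk.1 hk.2
    rw [add_eq_zero_iff_eq_neg, div_eq_iff hΔt'] at h
    rw [h]
    ring
  have hpot : potentialEnergy Nx ε₀ L Ej1 - potentialEnergy Nx ε₀ L Ej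
      = -∑ s ∈ S, (kineticEnergy L (ms s) (αs s) (us s) (Cj1 s)
          - kineticEnergy L (ms s) (αs s) (us s) (Cj s)) := by
    rw [potentialEnergy_sub, sum_congr rfl hkin, sum_congr rfl fun k hk ↦ by rw [hfield k hk]]
    simp only [sum_mul, mul_sum, neg_mul, sum_neg_distrib]
    rw [sum_comm]
    simp only [mul_neg, mul_sum, mul_assoc]
  rw [sum_sub_distrib] at hpot
  linear_combination hpot

/-- Discrete total energy conservation for the fully discrete
Fourier–Hermite scheme. -/
theorem discrete_energy_conservation {σ : Type*} (S : Finset σ)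
    (Nv Nx : ℕ) (hNv : 2 ≤ Nv) (L Δt ε₀ : ℝ) (hL : 0 < L) (hΔt : 0 < Δt) (hε₀ : 0 < ε₀)
    (ms qs αs us : σ → ℝ) (hms : ∀ s ∈ S, 0 < ms s) (hαs : ∀ s ∈ S, 0 < αs s)
    (Cj Cj1 : σ → ℤ → ℤ → ℂ) (Ej Ej1 : ℤ → ℂ)
    (hCjlo : ∀ s ∈ S, ∀ k : ℤ, Cj s (-1) k = 0) (hCj1lo : ∀ s ∈ S, ∀ k : ℤ, Cj1 s (-1) k = 0)
    (hCjhi : ∀ s ∈ S, ∀ k : ℤ, Cj s ((Nv : ℤ) + 1) k = 0)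
    (hCj1hi : ∀ s ∈ S, ∀ k : ℤ, Cj1 s ((Nv : ℤ) + 1) k = 0)
    (hEj : ∀ k : ℤ, (Nx : ℤ) < |k| → Ej k = 0) (hEj1 : ∀ k : ℤ, (Nx : ℤ) < |k| → Ej1 k = 0)
    (hVlasov : ∀ s ∈ S, ∀ n k : ℤ, 0 ≤ n → n ≤ (Nv : ℤ) → -(Nx : ℤ) ≤ k → k ≤ (Nx : ℤ) →
      vlasovEq Nx L Δt (ms s) (qs s) (αs s) (us s) (Cj s) (Cj1 s) Ej Ej1 n k)
    (hAmpere : ∀ k : ℤ, -(Nx : ℤ) ≤ k → k ≤ (Nx : ℤ) →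
      (ε₀ : ℂ) * (Ej1 k - Ej k) / (Δt : ℂ)
        + ∑ s ∈ S, (qs s : ℂ) * (αs s : ℂ) *
            ((us s : ℂ) * midpt (Cj s 0 k) (Cj1 s 0 k)
              + ((αs s : ℂ) / (Real.sqrt 2 : ℂ)) * midpt (Cj s 1 k) (Cj1 s 1 k)) = 0) :
    (∑ s ∈ S, kineticEnergy L (ms s) (αs s) (us s) (Cj1 s)) + potentialEnergy Nx ε₀ L Ej1
      = (∑ s ∈ S, kineticEnergy L (ms s) (αs s) (us s) (Cj s))
          + potentialEnergy Nx ε₀ L Ej :=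
  discrete_energy_conservation_general S Nv Nx hNv L Δt ε₀ hΔt ms qs αs us hms hαs Cj Cj1 Ej Ej1
    hVlasov hAmpere
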